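/- (Theorem 2, fixed-point property.) The function q(y) := sup_{n ∈ ℕ₀} q_n(y) is a fixed point of D: for all y ∈ ℝ^d, (D q)(y) = q(y). -/

import Mathlib

open Finset

/-- The weighted arithmetic average operator:
`(A f)(y) = ∑ k, α k * f (y - x k)`. -/
noncomputable def avgOp (d m : ℕ) (α : Fin m → ℝ) (x : Fin m → (Fin d → ℝ))
    (f : (Fin d → ℝ) → ℝ) : (Fin d → ℝ) → ℝ :=
  fun y => ∑ k, α k * f (y - x k)

/-- The Bermudan iteration operator: `(D f)(y) = max (c * (A f)(y)) (g y)`. -/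
noncomputable def bermOp (d m : ℕ) (α : Fin m → ℝ) (x : Fin m → (Fin d → ℝ))
    (c : ℝ) (g : (Fin d → ℝ) → ℝ) (f : (Fin d → ℝ) → ℝ) : (Fin d → ℝ) → ℝ :=
  fun y => max (c * avgOp d m α x f y) (g y)

/-! The iterates `q_n = D^n (max g 0)` increase, because `D` is monotone and
`max g 0 ≤ D (max g 0)`, and they stay below `h`, because `D` maps `{f ≤ h}` into
itself (`A h = h`, `c ≤ 1`, `max 0 g ≤ h`). Hence they converge pointwise to their
supremum `q`. Since `(D f)(y)` depends on only finitely many values of `f`, `D` is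
continuous for the topology of pointwise convergence, so the limit `q` is a fixed point. -/

open Function Set

theorem Monotone.isFixedPt_iSup_iterate {α : Type*} [TopologicalSpace α] [T2Space α]
    [ConditionallyCompletePartialOrderSup α] [SupConvergenceClass α] {T : α → α} {x b : α}
    (hT : Monotone T) (hT_cont : Continuous T) (hx : x ≤ T x) (hxb : x ≤ b)
    (hb : MapsTo T (Iic b) (Iic b)) :
    IsFixedPt T (⨆ n, T^[n] x) := by
  have hbdd : BddAbove (range fun n => T^[n] x) :=
    ⟨b, forall_mem_range.2 fun n => hb.iterate n hxb⟩
  exact isFixedPt_of_tendsto_iterate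
    (tendsto_atTop_ciSup (hT.monotone_iterate_of_le_map hx) hbdd) hT_cont.continuousAt

section Operators

variable {d m : ℕ} {α : Fin m → ℝ} {x : Fin m → (Fin d → ℝ)} {c : ℝ}
  {g : (Fin d → ℝ) → ℝ}

theorem avgOp_mono (hα : ∀ k, 0 ≤ α k) : Monotone (avgOp d m α x) :=
  fun _ _ hf _ => sum_le_sum fun k _ => mul_le_mul_of_nonneg_left (hf _) (hα k)

theorem avgOp_nonneg (hα : ∀ k, 0 ≤ α k) {f : (Fin d → ℝ) → ℝ} (hf : 0 ≤ f) (y : Fin d → ℝ) :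
    0 ≤ avgOp d m α x f y :=
  sum_nonneg fun k _ => mul_nonneg (hα k) (hf _)

theorem bermOp_mono (hα : ∀ k, 0 ≤ α k) (hc : 0 ≤ c) : Monotone (bermOp d m α x c g) :=
  fun _ _ hf y => max_le_max_right _ (mul_le_mul_of_nonneg_left (avgOp_mono hα hf y) hc)

theorem continuous_bermOp : Continuous (bermOp d m α x c g) := by
  refine continuous_pi fun y => ?_
  unfold bermOp avgOp
  fun_prop

theorem max_zero_le_bermOp (hα : ∀ k, 0 ≤ α k) (hc : 0 ≤ c) :
    (fun y => max (g y) 0) ≤ bermOp d m α x c g (fun y => max (g y) 0) := fun y =>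
  max_le (le_max_right _ _) <| le_max_of_le_left <|
    mul_nonneg hc (avgOp_nonneg hα (fun _ => le_max_right _ _) y)

theorem mapsTo_bermOp_Iic {h : (Fin d → ℝ) → ℝ} (hα : ∀ k, 0 ≤ α k) (hc : c ∈ Icc (0 : ℝ) 1)
    (hh : ∀ y, avgOp d m α x h y = h y) (hgh : ∀ y, max 0 (g y) ≤ h y) :
    MapsTo (bermOp d m α x c g) (Iic h) (Iic h) := by
  intro f (hf : f ≤ h) y
  have h_nonneg : 0 ≤ h y := (le_max_left _ _).trans (hgh y)
  refine max_le ?_ ((le_max_right _ _).trans (hgh y))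
  calc c * avgOp d m α x f y ≤ c * avgOp d m α x h y :=
        mul_le_mul_of_nonneg_left (avgOp_mono hα hf y) hc.1
    _ = c * h y := by rw [hh]
    _ ≤ h y := mul_le_of_le_one_left h_nonneg hc.2

end Operators

theorem qsup_fixed_point_general (d m : ℕ)
    (α : Fin m → ℝ) (hα : ∀ k, α k ∈ Set.Icc (0:ℝ) 1)
    (x : Fin m → (Fin d → ℝ))
    (c : ℝ) (hc : c ∈ Set.Ioo (0:ℝ) 1)
    (g h : (Fin d → ℝ) → ℝ)
    (hh : ∀ y, avgOp d m α x h y = h y)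
    (hgh : ∀ y, max 0 (g y) ≤ h y)
    (q : ℕ → (Fin d → ℝ) → ℝ)
    (hq : ∀ n, q n = (bermOp d m α x c g)^[n] (fun y => max (g y) 0))
    (qsup : (Fin d → ℝ) → ℝ) (hqsup : ∀ y, qsup y = ⨆ n : ℕ, q n y) :
    ∀ y, bermOp d m α x c g qsup y = qsup y := by
  have hα₀ : ∀ k, 0 ≤ α k := fun k => (hα k).1
  have hqsup_eq : qsup = ⨆ n, (bermOp d m α x c g)^[n] (fun y => max (g y) 0) := by
    ext y
    simp only [hqsup, hq, iSup_apply]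
  have hfix := (bermOp_mono hα₀ hc.1.le).isFixedPt_iSup_iterate continuous_bermOp
    (max_zero_le_bermOp hα₀ hc.1.le) (fun y => by simpa only [max_comm] using hgh y)
    (mapsTo_bermOp_Iic hα₀ (Ioo_subset_Icc_self hc) hh hgh)
  rw [← hqsup_eq] at hfix
  exact congrFun hfix

/-- Theorem 2, fixed-point property: `q = ⨆ n, q_n` is a fixed
point of `D`. -/
theorem qsup_fixed_point (d m : ℕ) (hm : 1 ≤ m)
    (α : Fin m → ℝ) (hα : ∀ k, α k ∈ Set.Icc (0:ℝ) 1) (hsum : ∑ k, α k = 1)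
    (x : Fin m → (Fin d → ℝ))
    (c : ℝ) (hc : c ∈ Set.Ioo (0:ℝ) 1)
    (g h : (Fin d → ℝ) → ℝ)
    (hg : ∀ y, g y ≤ avgOp d m α x g y)
    (hh : ∀ y, avgOp d m α x h y = h y)
    (hgh : ∀ y, max 0 (g y) ≤ h y)
    (q : ℕ → (Fin d → ℝ) → ℝ)
    (hq : ∀ n, q n = (bermOp d m α x c g)^[n] (fun y => max (g y) 0))
    (qsup : (Fin d → ℝ) → ℝ) (hqsup : ∀ y, qsup y = ⨆ n : ℕ, q n y) :
    ∀ y, bermOp d m α x c g qsup y = qsup y :=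
  qsup_fixed_point_general d m α hα x c hc g h hh hgh q hq qsup hqsup
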